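/- arXiv:2008.07904 — 2 statements merged into one kernel-verified Lean document; each statement's English description precedes it below -/
import Mathlib

section
/- The disjoint union K₃ ∪ C₆ of a triangle and a six-cycle satisfies Oχ(K₃ ∪ C₆) = 3; in particular it admits two orthogonal proper colourings with 3 colours, and (having 9 vertices) in any such pair every one of the 9 colour pairs occurs on exactly one vertex. -/
/-- `G` admits two orthogonal proper colourings, each using at most `k` colours:
two proper colourings such that no two distinct vertices receive the same pair of colours. -/
def HasOrthColoring {V : Type*} (G : SimpleGraph V) (k : ℕ) : Prop :=
  ∃ c₁ c₂ : V → Fin k,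
    (∀ ⦃u v⦄, G.Adj u v → c₁ u ≠ c₁ v) ∧
    (∀ ⦃u v⦄, G.Adj u v → c₂ u ≠ c₂ v) ∧
    Function.Injective fun v => (c₁ v, c₂ v)

/-- The disjoint union `K₃ ∪ C₆` of a triangle and a six-cycle. -/
def triangleUnionHexagon : SimpleGraph (Fin 3 ⊕ Fin 6) :=
  (⊤ : SimpleGraph (Fin 3)) ⊕g SimpleGraph.cycleGraph 6

instance : DecidableRel triangleUnionHexagon.Adj
  | .inl u, .inl v => inferInstanceAs (Decidable ((⊤ : SimpleGraph (Fin 3)).Adj u v))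
  | .inl _, .inr _ => .isFalse (by simp [triangleUnionHexagon])
  | .inr _, .inl _ => .isFalse (by simp [triangleUnionHexagon])
  | .inr u, .inr v => inferInstanceAs (Decidable ((SimpleGraph.cycleGraph 6).Adj u v))

def aux1 : (Fin 3 ⊕ Fin 6) → Fin 3
  | .inl i => i
  | .inr j => ![0, 1, 0, 2, 1, 2] j

def aux2 : (Fin 3 ⊕ Fin 6) → Fin 3
  | .inl i => i
  | .inr j => ![1, 0, 2, 1, 2, 0] j

/-- `Oχ(K₃ ∪ C₆) = 3`, and in any pair of orthogonal proper `3`-colourings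
each of the `9` colour pairs occurs on exactly one of the `9` vertices. -/
theorem orthChromatic_triangleUnionHexagon :
    IsLeast {k | HasOrthColoring triangleUnionHexagon k} 3 ∧
    ∀ c₁ c₂ : (Fin 3 ⊕ Fin 6) → Fin 3,
      (∀ ⦃u v⦄, triangleUnionHexagon.Adj u v → c₁ u ≠ c₁ v) →
      (∀ ⦃u v⦄, triangleUnionHexagon.Adj u v → c₂ u ≠ c₂ v) →
      (Function.Injective fun v => (c₁ v, c₂ v)) →
      Function.Bijective fun v => (c₁ v, c₂ v) := by
  refine ⟨⟨⟨aux1, aux2, ?_, ?_, ?_⟩, ?_⟩, ?_⟩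
  · decide
  · decide
  · decide
  · rintro k ⟨c₁, c₂, -, -, hinj⟩
    have h := Fintype.card_le_of_injective _ hinj
    simp only [Fintype.card_sum, Fintype.card_prod, Fintype.card_fin] at h
    nlinarith
  · intro c₁ c₂ _ _ hinj
    rw [Fintype.bijective_iff_injective_and_card]
    exact ⟨hinj, by simp⟩
end

section
/- For odd n ≥ 3, let T be the tree obtained from the double star D_{n²−1} by subdividing the edge joining the two centres (i.e. two centres u and v each adjacent to (n²−1)/2 − 1 leaves and both adjacent to one common middle vertex). Then T has n² vertices, maximum degree (n²−1)/2 < n²/2, and T admits no pair of orthogonal proper colourings each using at most n colours. -/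
/-- The double star `D_{2(l+1)}` with the central edge subdivided: a middle vertex `none`
adjacent to the two centres `some (i, none)`, and each centre adjacent to its `l` leaves
`some (i, some j)`. -/
def subdividedDoubleStar (l : ℕ) : SimpleGraph (Option (Fin 2 × Option (Fin l))) :=
  SimpleGraph.fromRel fun a b =>
    (∃ i : Fin 2, a = some (i, none) ∧ b = none) ∨
    (∃ (i : Fin 2) (j : Fin l), a = some (i, none) ∧ b = some (i, some j))

lemma sds_adj_center_iff (l : ℕ) (i : Fin 2) (w : Option (Fin 2 × Option (Fin l))) :
    (subdividedDoubleStar l).Adj (some (i, none)) w ↔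
      w = none ∨ ∃ j, w = some (i, some j) := by
  rw [subdividedDoubleStar, SimpleGraph.fromRel_adj]
  constructor
  · rintro ⟨hne, (⟨i', h1, h2⟩ | ⟨i', j, h1, h2⟩) | (⟨i', h1, h2⟩ | ⟨i', j, h1, h2⟩)⟩
    · exact Or.inl h2
    · simp only [Option.some.injEq, Prod.mk.injEq] at h1
      exact Or.inr ⟨j, by rw [h2, h1.1]⟩
    · simp at h2
    · simp at h2
  · rintro (rfl | ⟨j, rfl⟩)
    · exact ⟨by simp, Or.inl (Or.inl ⟨i, rfl, rfl⟩)⟩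
    · exact ⟨by simp, Or.inl (Or.inr ⟨i, j, rfl, rfl⟩)⟩

lemma sds_adj_none_iff (l : ℕ) (w : Option (Fin 2 × Option (Fin l))) :
    (subdividedDoubleStar l).Adj none w ↔
      w = some (0, none) ∨ w = some (1, none) := by
  rw [subdividedDoubleStar, SimpleGraph.fromRel_adj]
  constructor
  · rintro ⟨hne, (⟨i', h1, h2⟩ | ⟨i', j, h1, h2⟩) | (⟨i', h1, h2⟩ | ⟨i', j, h1, h2⟩)⟩
    · simp at h1
    · simp at h1
    · rcases i' with ⟨iv, hi⟩
      interval_cases iv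
      · exact Or.inl h1
      · exact Or.inr h1
    · simp at h2
  · rintro (rfl | rfl)
    · exact ⟨by simp, Or.inr (Or.inl ⟨0, rfl, rfl⟩)⟩
    · exact ⟨by simp, Or.inr (Or.inl ⟨1, rfl, rfl⟩)⟩

lemma sds_adj_leaf_iff (l : ℕ) (i : Fin 2) (j : Fin l) (w : Option (Fin 2 × Option (Fin l))) :
    (subdividedDoubleStar l).Adj (some (i, some j)) w ↔ w = some (i, none) := by
  rw [subdividedDoubleStar, SimpleGraph.fromRel_adj]
  constructor
  · rintro ⟨hne, (⟨i', h1, h2⟩ | ⟨i', j', h1, h2⟩) | (⟨i', h1, h2⟩ | ⟨i', j', h1, h2⟩)⟩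
    · simp at h1
    · simp at h1
    · simp at h2
    · simp only [Option.some.injEq, Prod.mk.injEq] at h2
      rw [h1, h2.1]
  · rintro rfl
    exact ⟨by simp, Or.inr (Or.inr ⟨i, j, rfl, rfl⟩)⟩

lemma sds_ncard_center (l : ℕ) (i : Fin 2) :
    ((subdividedDoubleStar l).neighborSet (some (i, none))).ncard = l + 1 := by
  have hg : Function.Injective (fun o : Option (Fin l) =>
      (Option.map (fun j => (i, some j)) o : Option (Fin 2 × Option (Fin l)))) := by
    apply Option.map_injective
    intro a b h
    simpa using h
  have hset : (subdividedDoubleStar l).neighborSet (some (i, none)) =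
      Set.range (fun o : Option (Fin l) =>
        (Option.map (fun j => (i, some j)) o : Option (Fin 2 × Option (Fin l)))) := by
    ext w
    rw [SimpleGraph.mem_neighborSet, sds_adj_center_iff]
    constructor
    · rintro (rfl | ⟨j, rfl⟩)
      · exact ⟨none, rfl⟩
      · exact ⟨some j, rfl⟩
    · rintro ⟨o, rfl⟩
      cases o with
      | none => exact Or.inl rfl
      | some j => exact Or.inr ⟨j, rfl⟩
  rw [hset, ← Set.image_univ, Set.ncard_image_of_injective _ hg, Set.ncard_univ,
    Nat.card_eq_fintype_card]
  simp

lemma sds_ncard_none (l : ℕ) :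
    ((subdividedDoubleStar l).neighborSet none).ncard ≤ 2 := by
  have hset : (subdividedDoubleStar l).neighborSet none =
      {some (0, none), some (1, none)} := by
    ext w; rw [SimpleGraph.mem_neighborSet, sds_adj_none_iff]; simp
  rw [hset]
  exact le_trans (Set.ncard_insert_le _ _) (by simp)

lemma sds_ncard_leaf (l : ℕ) (i : Fin 2) (j : Fin l) :
    ((subdividedDoubleStar l).neighborSet (some (i, some j))).ncard = 1 := by
  have hset : (subdividedDoubleStar l).neighborSet (some (i, some j)) =
      {some (i, none)} := by
    ext w; rw [SimpleGraph.mem_neighborSet, sds_adj_leaf_iff]; simp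
  rw [hset, Set.ncard_singleton]

lemma sds_no_orth (n l : ℕ) (hcard : 2 * l + 3 = n ^ 2) (hn3 : 3 ≤ n) :
    ¬ HasOrthColoring (subdividedDoubleStar l) n := by
  rintro ⟨c₁, c₂, h1, h2, hinj⟩
  -- bijectivity of the pair map
  have hbij : Function.Bijective (fun w : Option (Fin 2 × Option (Fin l)) => (c₁ w, c₂ w)) := by
    rw [Fintype.bijective_iff_injective_and_card]
    refine ⟨hinj, ?_⟩
    simp only [Fintype.card_option, Fintype.card_prod, Fintype.card_fin]
    have h := hcard; rw [pow_two] at h; omega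
  have hsurj := hbij.2
  -- adjacency facts
  have hadj_um : (subdividedDoubleStar l).Adj (some (0, none)) none := by
    rw [sds_adj_center_iff]; exact Or.inl rfl
  have hadj_vm : (subdividedDoubleStar l).Adj (some (1, none)) none := by
    rw [sds_adj_center_iff]; exact Or.inl rfl
  have hadj_ul : ∀ j : Fin l, (subdividedDoubleStar l).Adj (some (0, none)) (some (0, some j)) :=
    fun j => by rw [sds_adj_center_iff]; exact Or.inr ⟨j, rfl⟩
  have hadj_vl : ∀ j : Fin l, (subdividedDoubleStar l).Adj (some (1, none)) (some (1, some j)) :=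
    fun j => by rw [sds_adj_center_iff]; exact Or.inr ⟨j, rfl⟩
  -- every vertex is u, v, or adjacent to u or v
  have hkey : ∀ w : Option (Fin 2 × Option (Fin l)), w = some (0, none) ∨ w = some (1, none) ∨
      (subdividedDoubleStar l).Adj (some (0, none)) w ∨
      (subdividedDoubleStar l).Adj (some (1, none)) w := by
    rintro (_ | ⟨⟨iv, hi⟩, (_ | j)⟩)
    · exact Or.inr (Or.inr (Or.inl hadj_um))
    · interval_cases iv
      · exact Or.inl rfl
      · exact Or.inr (Or.inl rfl)
    · interval_cases iv
      · exact Or.inr (Or.inr (Or.inl (hadj_ul j)))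
      · exact Or.inr (Or.inr (Or.inr (hadj_vl j)))
  -- colours of the two centres differ in both coordinates
  have hdiff : ∀ (c : Option (Fin 2 × Option (Fin l)) → Fin n),
      (∀ y : Fin n, ∃ w, (w = some (0, none) ∨ w = some (1, none)) ∧ c w = y) → False := by
    intro c hw
    obtain ⟨w0, hw0, hc0⟩ := hw ⟨0, by omega⟩
    obtain ⟨w1, hw1, hc1⟩ := hw ⟨1, by omega⟩
    obtain ⟨w2, hw2, hc2⟩ := hw ⟨2, by omega⟩
    have d01 : w0 ≠ w1 := fun h => by rw [h, hc1] at hc0; simp [Fin.ext_iff] at hc0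
    have d02 : w0 ≠ w2 := fun h => by rw [h, hc2] at hc0; simp [Fin.ext_iff] at hc0
    have d12 : w1 ≠ w2 := fun h => by rw [h, hc2] at hc1; simp [Fin.ext_iff] at hc1
    rcases hw0 with rfl | rfl <;> rcases hw1 with rfl | rfl <;> rcases hw2 with rfl | rfl <;>
      simp_all
  have hab1 : c₁ (some (0, none)) ≠ c₁ (some (1, none)) := by
    intro heq
    apply hdiff c₂
    intro y
    obtain ⟨w, hwf⟩ := hsurj (c₁ (some (0, none)), y)
    rw [Prod.mk.injEq] at hwf
    refine ⟨w, ?_, hwf.2⟩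
    rcases hkey w with rfl | rfl | ha | ha
    · exact Or.inl rfl
    · exact Or.inr rfl
    · exact absurd hwf.1.symm (h1 ha)
    · exact absurd (hwf.1.trans heq).symm (h1 ha)
  have hab2 : c₂ (some (0, none)) ≠ c₂ (some (1, none)) := by
    intro heq
    apply hdiff c₁
    intro y
    obtain ⟨w, hwf⟩ := hsurj (y, c₂ (some (0, none)))
    rw [Prod.mk.injEq] at hwf
    refine ⟨w, ?_, hwf.1⟩
    rcases hkey w with rfl | rfl | ha | ha
    · exact Or.inl rfl
    · exact Or.inr rfl
    · exact absurd hwf.2.symm (h2 ha)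
    · exact absurd (hwf.2.trans heq).symm (h2 ha)
  -- counting transfer
  have hcount : ∀ (pv : Option (Fin 2 × Option (Fin l)) → Prop) (pp : Fin n × Fin n → Prop)
      (_ : DecidablePred pv) (_ : DecidablePred pp), (∀ w, pv w ↔ pp (c₁ w, c₂ w)) →
      (Finset.univ.filter pv).card = (Finset.univ.filter pp).card := by
    intro pv pp i1 i2 hiff
    apply Finset.card_bij (fun w _ => (c₁ w, c₂ w))
    · intro a ha; simp only [Finset.mem_filter, Finset.mem_univ, true_and] at ha ⊢
      exact (hiff a).mp ha
    · intro a _ b _ h; exact hinj h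
    · intro b hb
      obtain ⟨a, rfl⟩ := hsurj b
      simp only [Finset.mem_filter, Finset.mem_univ, true_and] at hb
      exact ⟨a, by simp [(hiff a).mpr hb], rfl⟩
  -- facts about the middle vertex and leaves
  have hm1a : c₁ none ≠ c₁ (some (0, none)) := (h1 hadj_um).symm
  have hm1b : c₁ none ≠ c₁ (some (1, none)) := (h1 hadj_vm).symm
  have hm2a : c₂ none ≠ c₂ (some (0, none)) := (h2 hadj_um).symm
  have hm2b : c₂ none ≠ c₂ (some (1, none)) := (h2 hadj_vm).symm
  -- pair-side cardinalities
  have cardne : ∀ b : Fin n, (Finset.univ.filter (· ≠ b)).card = n - 1 := by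
    intro b; rw [Finset.filter_ne']; simp
  have cardne2 : ∀ a b : Fin n, a ≠ b →
      (Finset.univ.filter fun x => x ≠ a ∧ x ≠ b).card = n - 2 := by
    intro a b hab
    have : (Finset.univ.filter fun x : Fin n => x ≠ a ∧ x ≠ b) =
        (Finset.univ.erase a).erase b := by
      ext x; simp [and_comm]
    rw [this, Finset.card_erase_of_mem (Finset.mem_erase.mpr ⟨hab.symm, Finset.mem_univ b⟩),
      Finset.card_erase_of_mem (Finset.mem_univ a)]
    rw [Finset.card_univ, Fintype.card_fin]
    omega
  have cardprodne : ∀ a b : Fin n,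
      (Finset.univ.filter fun q : Fin n × Fin n => q.1 ≠ a ∧ q.2 ≠ b).card =
        (n - 1) * (n - 1) := by
    intro a b
    rw [show (Finset.univ.filter fun q : Fin n × Fin n => q.1 ≠ a ∧ q.2 ≠ b) =
        (Finset.univ.filter (· ≠ a)) ×ˢ (Finset.univ.filter (· ≠ b)) from by
      ext q; simp [Finset.mem_product], Finset.card_product, cardne, cardne]
  have cardprodne2 : ∀ a1 b1 a2 b2 : Fin n, a1 ≠ b1 → a2 ≠ b2 →
      (Finset.univ.filter fun q : Fin n × Fin n =>
        (q.1 ≠ a1 ∧ q.1 ≠ b1) ∧ (q.2 ≠ a2 ∧ q.2 ≠ b2)).card = (n - 2) * (n - 2) := by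
    intro a1 b1 a2 b2 hx hy
    rw [show (Finset.univ.filter fun q : Fin n × Fin n =>
        (q.1 ≠ a1 ∧ q.1 ≠ b1) ∧ (q.2 ≠ a2 ∧ q.2 ≠ b2)) =
        (Finset.univ.filter fun x => x ≠ a1 ∧ x ≠ b1) ×ˢ
          (Finset.univ.filter fun x => x ≠ a2 ∧ x ≠ b2) from by
      ext q; simp [Finset.mem_product], Finset.card_product, cardne2 _ _ hx, cardne2 _ _ hy]
  -- vertex-side sum decomposition
  have hdecomp : ∀ (p : Option (Fin 2 × Option (Fin l)) → Prop) (_ : DecidablePred p),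
      (Finset.univ.filter p).card =
        (if p none then 1 else 0) +
        (((if p (some (0, none)) then 1 else 0) +
          ∑ j : Fin l, if p (some (0, some j)) then 1 else 0) +
         ((if p (some (1, none)) then 1 else 0) +
          ∑ j : Fin l, if p (some (1, some j)) then 1 else 0)) := by
    intro p dp
    rw [Finset.card_filter, Fintype.sum_option, Fintype.sum_prod_type, Fin.sum_univ_two,
      Fintype.sum_option, Fintype.sum_option]
  -- the three equations
  set s : ℕ := ∑ j : Fin l, if (c₁ (some (0, some j)) ≠ c₁ (some (1, none)) ∧
      c₂ (some (0, some j)) ≠ c₂ (some (1, none))) then 1 else 0 with hs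
  set t : ℕ := ∑ j : Fin l, if (c₁ (some (1, some j)) ≠ c₁ (some (0, none)) ∧
      c₂ (some (1, some j)) ≠ c₂ (some (0, none))) then 1 else 0 with ht
  have eq1 : 1 + ((1 + s) + (0 + l)) = (n - 1) * (n - 1) := by
    have h := hcount
      (fun w => c₁ w ≠ c₁ (some (1, none)) ∧ c₂ w ≠ c₂ (some (1, none)))
      (fun q => q.1 ≠ c₁ (some (1, none)) ∧ q.2 ≠ c₂ (some (1, none)))
      inferInstance inferInstance (fun w => Iff.rfl)
    rw [hdecomp _ inferInstance, cardprodne] at h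
    have ev : ∑ j : Fin l, (if (c₁ (some (1, some j)) ≠ c₁ (some (1, none)) ∧
        c₂ (some (1, some j)) ≠ c₂ (some (1, none))) then (1:ℕ) else 0) = l := by
      rw [Finset.sum_congr rfl
        (fun j _ => if_pos ⟨(h1 (hadj_vl j)).symm, (h2 (hadj_vl j)).symm⟩)]
      simp
    rw [if_pos ⟨hm1b, hm2b⟩, if_pos ⟨hab1, hab2⟩,
      if_neg (show ¬(c₁ (some (1, none)) ≠ c₁ (some (1, none)) ∧
        c₂ (some (1, none)) ≠ c₂ (some (1, none))) from fun hc => hc.1 rfl),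
      ev, ← hs] at h
    omega
  have eq2 : 1 + ((0 + l) + (1 + t)) = (n - 1) * (n - 1) := by
    have h := hcount
      (fun w => c₁ w ≠ c₁ (some (0, none)) ∧ c₂ w ≠ c₂ (some (0, none)))
      (fun q => q.1 ≠ c₁ (some (0, none)) ∧ q.2 ≠ c₂ (some (0, none)))
      inferInstance inferInstance (fun w => Iff.rfl)
    rw [hdecomp _ inferInstance, cardprodne] at h
    have eu : ∑ j : Fin l, (if (c₁ (some (0, some j)) ≠ c₁ (some (0, none)) ∧
        c₂ (some (0, some j)) ≠ c₂ (some (0, none))) then (1:ℕ) else 0) = l := by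
      rw [Finset.sum_congr rfl
        (fun j _ => if_pos ⟨(h1 (hadj_ul j)).symm, (h2 (hadj_ul j)).symm⟩)]
      simp
    rw [if_pos ⟨hm1a, hm2a⟩,
      if_neg (show ¬(c₁ (some (0, none)) ≠ c₁ (some (0, none)) ∧
        c₂ (some (0, none)) ≠ c₂ (some (0, none))) from fun hc => hc.1 rfl),
      if_pos ⟨hab1.symm, hab2.symm⟩, eu, ← ht] at h
    omega
  have eq3 : 1 + ((0 + s) + (0 + t)) = (n - 2) * (n - 2) := by
    have h := hcount
      (fun w => (c₁ w ≠ c₁ (some (0, none)) ∧ c₁ w ≠ c₁ (some (1, none))) ∧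
        (c₂ w ≠ c₂ (some (0, none)) ∧ c₂ w ≠ c₂ (some (1, none))))
      (fun q => (q.1 ≠ c₁ (some (0, none)) ∧ q.1 ≠ c₁ (some (1, none))) ∧
        (q.2 ≠ c₂ (some (0, none)) ∧ q.2 ≠ c₂ (some (1, none))))
      inferInstance inferInstance (fun w => Iff.rfl)
    rw [hdecomp _ inferInstance, cardprodne2 _ _ _ _ hab1 hab2] at h
    rw [if_pos ⟨⟨hm1a, hm1b⟩, ⟨hm2a, hm2b⟩⟩,
      if_neg (show ¬((c₁ (some (0, none)) ≠ c₁ (some (0, none)) ∧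
        c₁ (some (0, none)) ≠ c₁ (some (1, none))) ∧
        (c₂ (some (0, none)) ≠ c₂ (some (0, none)) ∧
        c₂ (some (0, none)) ≠ c₂ (some (1, none)))) from fun hc => hc.1.1 rfl),
      if_neg (show ¬((c₁ (some (1, none)) ≠ c₁ (some (0, none)) ∧
        c₁ (some (1, none)) ≠ c₁ (some (1, none))) ∧
        (c₂ (some (1, none)) ≠ c₂ (some (0, none)) ∧
        c₂ (some (1, none)) ≠ c₂ (some (1, none)))) from fun hc => hc.1.2 rfl)] at h
    have es : ∑ j : Fin l, (if ((c₁ (some (0, some j)) ≠ c₁ (some (0, none)) ∧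
        c₁ (some (0, some j)) ≠ c₁ (some (1, none))) ∧
        (c₂ (some (0, some j)) ≠ c₂ (some (0, none)) ∧
        c₂ (some (0, some j)) ≠ c₂ (some (1, none)))) then (1:ℕ) else 0) = s := by
      rw [hs]
      refine Finset.sum_congr rfl fun j _ => ?_
      by_cases hb : c₁ (some (0, some j)) ≠ c₁ (some (1, none)) ∧
          c₂ (some (0, some j)) ≠ c₂ (some (1, none))
      · rw [if_pos ⟨⟨(h1 (hadj_ul j)).symm, hb.1⟩, ⟨(h2 (hadj_ul j)).symm, hb.2⟩⟩, if_pos hb]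
      · rw [if_neg (fun hc => hb ⟨hc.1.2, hc.2.2⟩), if_neg hb]
    have et : ∑ j : Fin l, (if ((c₁ (some (1, some j)) ≠ c₁ (some (0, none)) ∧
        c₁ (some (1, some j)) ≠ c₁ (some (1, none))) ∧
        (c₂ (some (1, some j)) ≠ c₂ (some (0, none)) ∧
        c₂ (some (1, some j)) ≠ c₂ (some (1, none)))) then (1:ℕ) else 0) = t := by
      rw [ht]
      refine Finset.sum_congr rfl fun j _ => ?_
      by_cases hb : c₁ (some (1, some j)) ≠ c₁ (some (0, none)) ∧
          c₂ (some (1, some j)) ≠ c₂ (some (0, none))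
      · rw [if_pos ⟨⟨hb.1, (h1 (hadj_vl j)).symm⟩, ⟨hb.2, (h2 (hadj_vl j)).symm⟩⟩, if_pos hb]
      · rw [if_neg (fun hc => hb ⟨hc.1.1, hc.2.1⟩), if_neg hb]
    rw [es, et] at h
    omega
  -- final arithmetic contradiction
  obtain ⟨k, rfl⟩ : ∃ k, n = k + 3 := ⟨n - 3, by omega⟩
  have d1 : k + 3 - 1 = k + 2 := by omega
  have d2 : k + 3 - 2 = k + 1 := by omega
  rw [d1] at eq1 eq2
  rw [d2] at eq3
  rw [pow_two] at hcard
  nlinarith [eq1, eq2, eq3, hcard]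

/-- For odd `n ≥ 3`, the tree obtained from the double star `D_{n²-1}` by subdividing
the edge joining the two centres (each centre has `(n²-1)/2 - 1` leaves) has `n²`
vertices, maximum degree `(n²-1)/2` (which is `< n²/2`), and admits no pair of
orthogonal proper colourings each using at most `n` colours. -/
theorem subdividedDoubleStar_no_orthColoring (n : ℕ) (hn : Odd n) (hn3 : 3 ≤ n) :
    Nat.card (Option (Fin 2 × Option (Fin ((n ^ 2 - 1) / 2 - 1)))) = n ^ 2 ∧
    (∀ v, ((subdividedDoubleStar ((n ^ 2 - 1) / 2 - 1)).neighborSet v).ncard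
        ≤ (n ^ 2 - 1) / 2) ∧
    (∃ v, ((subdividedDoubleStar ((n ^ 2 - 1) / 2 - 1)).neighborSet v).ncard
        = (n ^ 2 - 1) / 2) ∧
    2 * ((n ^ 2 - 1) / 2) < n ^ 2 ∧
    ¬ HasOrthColoring (subdividedDoubleStar ((n ^ 2 - 1) / 2 - 1)) n := by
  have h9 : 9 ≤ n ^ 2 := by calc (9:ℕ) = 3 ^ 2 := rfl
                                 _ ≤ n ^ 2 := Nat.pow_le_pow_left hn3 2
  have hodd : n ^ 2 % 2 = 1 := Nat.odd_iff.mp (hn.pow)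
  have hl : 2 * ((n ^ 2 - 1) / 2 - 1) + 3 = n ^ 2 := by omega
  refine ⟨?_, ?_, ?_, ?_, ?_⟩
  · rw [Nat.card_eq_fintype_card]
    simp only [Fintype.card_option, Fintype.card_prod, Fintype.card_fin]
    omega
  · rintro (_ | ⟨i, (_ | j)⟩)
    · exact le_trans (sds_ncard_none _) (by omega)
    · rw [sds_ncard_center]; omega
    · rw [sds_ncard_leaf]; omega
  · exact ⟨some (0, none), by rw [sds_ncard_center]; omega⟩
  · omega
  · exact sds_no_orth n _ hl hn3
end
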